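/- arXiv:1903.04523 — 2 statements merged into one kernel-verified Lean document; each statement's English description precedes it below -/
import Mathlib

section
/- For every finite simple graph G with at least one vertex and every t ≥ 0, the domination number satisfies γ(ILT^t(G)) = γ(G). -/
open SimpleGraph

/-- Transitive step: each vertex `x` gets a clone `x'` adjacent to the closed
neighborhood of `x`. Original vertices are `Sum.inl`, clones are `Sum.inr`. -/
def LTstep {V : Type} (G : SimpleGraph V) : SimpleGraph (V ⊕ V) where
  Adj x y :=
    match x, y with
    | Sum.inl a, Sum.inl b => G.Adj a b
    | Sum.inl a, Sum.inr b => a = b ∨ G.Adj a b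
    | Sum.inr a, Sum.inl b => b = a ∨ G.Adj b a
    | Sum.inr _, Sum.inr _ => False
  symm := by
    constructor
    rintro (a|a) (b|b) h
    · exact h.symm
    · exact h
    · exact h
    · exact h.elim
  loopless := by
    constructor
    rintro (a|a) h
    · exact (G.ne_of_adj h) rfl
    · exact h

/-- Anti-transitive step: each vertex `x` gets an anti-clone `x*` adjacent to the
complement of the closed neighborhood of `x`. -/
def LATstep {V : Type} (G : SimpleGraph V) : SimpleGraph (V ⊕ V) where
  Adj x y :=
    match x, y with
    | Sum.inl a, Sum.inl b => G.Adj a b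
    | Sum.inl a, Sum.inr b => a ≠ b ∧ ¬ G.Adj a b
    | Sum.inr a, Sum.inl b => b ≠ a ∧ ¬ G.Adj b a
    | Sum.inr _, Sum.inr _ => False
  symm := by
    constructor
    rintro (a|a) (b|b) h
    · exact h.symm
    · exact h
    · exact h
    · exact h.elim
  loopless := by
    constructor
    rintro (a|a) h
    · exact (G.ne_of_adj h) rfl
    · exact h

/-- The vertex type of the `t`-th iterated local model graph. -/
def ILMVertex (V : Type) : ℕ → Type
  | 0 => V
  | t + 1 => ILMVertex V t ⊕ ILMVertex V t

instance ILMVertex.fintype {V : Type} [Fintype V] : ∀ t, Fintype (ILMVertex V t)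
  | 0 => inferInstanceAs (Fintype V)
  | t + 1 =>
    letI := ILMVertex.fintype (V := V) t
    inferInstanceAs (Fintype (ILMVertex V t ⊕ ILMVertex V t))

instance ILMVertex.nonempty {V : Type} [Nonempty V] : ∀ t, Nonempty (ILMVertex V t)
  | 0 => inferInstanceAs (Nonempty V)
  | t + 1 =>
    letI := ILMVertex.nonempty (V := V) t
    inferInstanceAs (Nonempty (ILMVertex V t ⊕ ILMVertex V t))

/-- The iterated local model: at step `t` apply a transitive step if `S t = true`
(i.e. `s_t = 1`) and an anti-transitive step if `S t = false` (i.e. `s_t = 0`). -/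
def ILM {V : Type} (S : ℕ → Bool) (G : SimpleGraph V) : (t : ℕ) → SimpleGraph (ILMVertex V t)
  | 0 => G
  | t + 1 => if S t then LTstep (ILM S G t) else LATstep (ILM S G t)

/-- The closed neighborhood `N[v]` of a vertex. -/
def closedNbhd {V : Type} (G : SimpleGraph V) (v : V) : Set V := insert v (G.neighborSet v)

/-- Two vertices whose closed neighborhoods partition the vertex set. -/
def PartitionsPair {V : Type} (G : SimpleGraph V) (u v : V) : Prop :=
  closedNbhd G u ∪ closedNbhd G v = Set.univ ∧ closedNbhd G u ∩ closedNbhd G v = ∅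

/-- A dominating set: every vertex is in the closed neighborhood of a member of `D`. -/
def IsDominatingSet {V : Type} (G : SimpleGraph V) (D : Finset V) : Prop :=
  ∀ v : V, ∃ u ∈ D, u = v ∨ G.Adj u v

/-- The domination number: minimum size of a dominating set. -/
noncomputable def dominationNumber {V : Type} [Fintype V] (G : SimpleGraph V) : ℕ :=
  sInf {n | ∃ D : Finset V, IsDominatingSet G D ∧ D.card = n}

/-- The local clustering coefficient of a vertex: the number of edges among its
neighbors divided by `(deg choose 2)` (interpreted as `0` when the degree is less
than `2`, by the convention `x / 0 = 0`). -/
noncomputable def localClusteringCoeff {V : Type} (G : SimpleGraph V) (x : V) : ℝ :=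
  (Nat.card (G.induce (G.neighborSet x)).edgeSet : ℝ) /
    ((Nat.card (G.neighborSet x)).choose 2 : ℝ)

/-- The clustering coefficient: the average of the local clustering coefficients. -/
noncomputable def clusteringCoeff {V : Type} [Fintype V] (G : SimpleGraph V) : ℝ :=
  (∑ x : V, localClusteringCoeff G x) / (Fintype.card V : ℝ)

lemma domSet_nonempty {W : Type} [Fintype W] (H : SimpleGraph W) :
    {n | ∃ D : Finset W, IsDominatingSet H D ∧ D.card = n}.Nonempty :=
  ⟨(Finset.univ : Finset W).card, Finset.univ,
    fun v => ⟨v, Finset.mem_univ v, Or.inl rfl⟩, rfl⟩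

lemma dominationNumber_LTstep {W : Type} [Fintype W] (H : SimpleGraph W) :
    dominationNumber (V := W ⊕ W) (LTstep H) = dominationNumber H := by
  classical
  apply le_antisymm
  · obtain ⟨D, hD, hcard⟩ := Nat.sInf_mem (domSet_nonempty H)
    refine Nat.sInf_le ⟨D.image Sum.inl, ?_, by
      rw [Finset.card_image_of_injective _ Sum.inl_injective, hcard]; rfl⟩
    rintro (v|v)
    · obtain ⟨u, hu, huv⟩ := hD v
      exact ⟨Sum.inl u, Finset.mem_image_of_mem _ hu, by
        rcases huv with h | h
        · exact Or.inl (by rw [h])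
        · exact Or.inr h⟩
    · obtain ⟨u, hu, huv⟩ := hD v
      exact ⟨Sum.inl u, Finset.mem_image_of_mem _ hu, Or.inr huv⟩
  · obtain ⟨D, hD, hcard⟩ := Nat.sInf_mem (domSet_nonempty (LTstep H))
    have hdom : IsDominatingSet H (D.image (Sum.elim id id)) := by
      intro v
      obtain ⟨u, hu, huv⟩ := hD (Sum.inl v)
      refine ⟨Sum.elim id id u, Finset.mem_image_of_mem _ hu, ?_⟩
      rcases u with a | a
      · rcases huv with h | h
        · exact Or.inl (Sum.inl.inj h)
        · exact Or.inr h
      · rcases huv with h | h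
        · exact nomatch h
        · rcases h with h | h
          · exact Or.inl h.symm
          · exact Or.inr h.symm
    calc dominationNumber H ≤ (D.image (Sum.elim id id)).card :=
          Nat.sInf_le ⟨_, hdom, rfl⟩
      _ ≤ D.card := Finset.card_image_le
      _ = _ := hcard

/-- Transitive steps preserve the domination number:
`γ(ILT^t(G)) = γ(G)` for all `t ≥ 0` (ILT is ILM with the all-ones sequence). -/
theorem dominationNumber_ILT {V : Type} [Fintype V] [Nonempty V] (G : SimpleGraph V) (t : ℕ) :
    dominationNumber (ILM (fun _ => true) G t) = dominationNumber G := by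
  induction t with
  | zero => rfl
  | succ t ih =>
    show dominationNumber (LTstep (ILM (fun _ => true) G t)) = _
    rw [dominationNumber_LTstep, ih]
end

section
/- Let S be the alternating binary sequence with s_t = 1 for even t and s_t = 0 for odd t, and let G = K_1 be the one-vertex graph. Then, as t → ∞ along even values of t, the ratio e_t / 2^{2t−2} of the number of edges of ILM^t(S,K_1) to 2^{2t−2} converges to 16/19. -/
open SimpleGraph

section ILMAux

open Finset

variable {V : Type} [Fintype V]

private lemma degree_eq_sum' (G : SimpleGraph V) [DecidableRel G.Adj] (v : V) :
    G.degree v = ∑ w, if G.Adj v w then 1 else 0 := by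
  rw [degree, neighborFinset_eq_filter, Finset.card_filter]

private lemma LT_degree_inl [DecidableEq V] (G : SimpleGraph V) [DecidableRel G.Adj]
    [DecidableRel (LTstep G).Adj] (a : V) :
    (LTstep G).degree (Sum.inl a) = 2 * G.degree a + 1 := by
  rw [degree_eq_sum', Fintype.sum_sum_type]
  have h1 : ∀ b : V, (if (LTstep G).Adj (Sum.inl a) (Sum.inl b) then (1:ℕ) else 0)
      = if G.Adj a b then 1 else 0 := fun b => if_congr Iff.rfl rfl rfl
  have h2 : ∀ b : V, (if (LTstep G).Adj (Sum.inl a) (Sum.inr b) then (1:ℕ) else 0)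
      = (if a = b then 1 else 0) + (if G.Adj a b then 1 else 0) := by
    intro b
    have he : ((LTstep G).Adj (Sum.inl a) (Sum.inr b)) ↔ (a = b ∨ G.Adj a b) := Iff.rfl
    by_cases hab : a = b
    · subst hab
      simp [he, SimpleGraph.irrefl]
    · by_cases hAdj : G.Adj a b <;> simp [he, hab, hAdj]
  rw [Finset.sum_congr rfl fun b _ => h1 b, Finset.sum_congr rfl fun b _ => h2 b,
    Finset.sum_add_distrib, Finset.sum_ite_eq, if_pos (mem_univ a), ← degree_eq_sum']
  ring

private lemma LT_degree_inr [DecidableEq V] (G : SimpleGraph V) [DecidableRel G.Adj]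
    [DecidableRel (LTstep G).Adj] (a : V) :
    (LTstep G).degree (Sum.inr a) = G.degree a + 1 := by
  rw [degree_eq_sum', Fintype.sum_sum_type]
  have h1 : ∀ b : V, (if (LTstep G).Adj (Sum.inr a) (Sum.inl b) then (1:ℕ) else 0)
      = (if b = a then 1 else 0) + (if G.Adj b a then 1 else 0) := by
    intro b
    have he : ((LTstep G).Adj (Sum.inr a) (Sum.inl b)) ↔ (b = a ∨ G.Adj b a) := Iff.rfl
    by_cases hab : b = a
    · subst hab
      simp [he, SimpleGraph.irrefl]
    · by_cases hAdj : G.Adj b a <;> simp [he, hab, hAdj]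
  have h2 : ∀ b : V, (if (LTstep G).Adj (Sum.inr a) (Sum.inr b) then (1:ℕ) else 0) = 0 :=
    fun b => if_neg (fun h => h)
  rw [Finset.sum_congr rfl fun b _ => h1 b, Finset.sum_congr rfl fun b _ => h2 b,
    Finset.sum_const_zero, add_zero, Finset.sum_add_distrib, Finset.sum_ite_eq',
    if_pos (mem_univ a)]
  have : ∀ b : V, (if G.Adj b a then (1:ℕ) else 0) = if G.Adj a b then 1 else 0 := by
    intro b
    by_cases h : G.Adj a b
    · simp [h, h.symm]
    · have h' : ¬ G.Adj b a := fun hh => h hh.symm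
      simp [h, h']
  rw [Finset.sum_congr rfl fun b _ => this b, ← degree_eq_sum']
  ring

private lemma LAT_degree_inl [DecidableEq V] (G : SimpleGraph V) [DecidableRel G.Adj]
    [DecidableRel (LATstep G).Adj] (a : V) :
    (LATstep G).degree (Sum.inl a) + 1 = Fintype.card V := by
  rw [degree_eq_sum', Fintype.sum_sum_type]
  have h1 : ∀ b : V, (if (LATstep G).Adj (Sum.inl a) (Sum.inl b) then (1:ℕ) else 0)
      = if G.Adj a b then 1 else 0 := fun b => if_congr Iff.rfl rfl rfl
  have h2 : ∀ b : V, (if (LATstep G).Adj (Sum.inl a) (Sum.inr b) then (1:ℕ) else 0)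
      = if a ≠ b ∧ ¬ G.Adj a b then 1 else 0 := fun b => if_congr Iff.rfl rfl rfl
  rw [Finset.sum_congr rfl fun b _ => h1 b, Finset.sum_congr rfl fun b _ => h2 b,
    ← Finset.sum_add_distrib]
  have h3 : ∀ b : V, ((if G.Adj a b then (1:ℕ) else 0) + if a ≠ b ∧ ¬ G.Adj a b then 1 else 0)
      = if a ≠ b then 1 else 0 := by
    intro b
    by_cases hab : a = b
    · subst hab; simp [SimpleGraph.irrefl]
    · by_cases hAdj : G.Adj a b <;> simp [hab, hAdj]
  rw [Finset.sum_congr rfl fun b _ => h3 b, ← Finset.card_filter]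
  have hf : Finset.filter (fun b => a ≠ b) Finset.univ = Finset.univ.erase a := by
    ext b; simp [eq_comm, Ne, and_comm]
  rw [hf, Finset.card_erase_of_mem (Finset.mem_univ a), Finset.card_univ]
  have : 1 ≤ Fintype.card V := Fintype.card_pos_iff.mpr ⟨a⟩
  omega

private lemma LAT_degree_inr [DecidableEq V] (G : SimpleGraph V) [DecidableRel G.Adj]
    [DecidableRel (LATstep G).Adj] (a : V) :
    (LATstep G).degree (Sum.inr a) + G.degree a + 1 = Fintype.card V := by
  rw [degree_eq_sum', Fintype.sum_sum_type]
  have h1 : ∀ b : V, (if (LATstep G).Adj (Sum.inr a) (Sum.inl b) then (1:ℕ) else 0)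
      = if b ≠ a ∧ ¬ G.Adj b a then 1 else 0 := fun b => if_congr Iff.rfl rfl rfl
  have h2 : ∀ b : V, (if (LATstep G).Adj (Sum.inr a) (Sum.inr b) then (1:ℕ) else 0) = 0 :=
    fun b => if_neg (fun h => h)
  rw [Finset.sum_congr rfl fun b _ => h1 b, Finset.sum_congr rfl fun b _ => h2 b,
    Finset.sum_const_zero, add_zero, degree_eq_sum', ← Finset.sum_add_distrib]
  have h3 : ∀ b : V, ((if b ≠ a ∧ ¬ G.Adj b a then (1:ℕ) else 0) + if G.Adj a b then 1 else 0)
      = if b ≠ a then 1 else 0 := by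
    intro b
    by_cases hab : b = a
    · subst hab; simp [SimpleGraph.irrefl]
    · by_cases hAdj : G.Adj a b
      · simp [hab, hAdj, hAdj.symm]
      · have h' : ¬ G.Adj b a := fun h => hAdj h.symm
        simp [hab, hAdj, h']
  rw [Finset.sum_congr rfl fun b _ => h3 b, ← Finset.card_filter, Finset.filter_ne',
    Finset.card_erase_of_mem (Finset.mem_univ a), Finset.card_univ]
  have : 1 ≤ Fintype.card V := Fintype.card_pos_iff.mpr ⟨a⟩
  omega

private lemma Nat_card_edgeSet (G : SimpleGraph V) [Fintype G.edgeSet] :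
    (Nat.card G.edgeSet : ℤ) = (#G.edgeFinset : ℤ) := by
  rw [Nat.card_eq_fintype_card, edgeFinset_card]

private lemma LT_card (G : SimpleGraph V) :
    (Nat.card (LTstep G).edgeSet : ℤ) = 3 * Nat.card G.edgeSet + Nat.card V := by
  classical
  have hh := (LTstep G).sum_degrees_eq_twice_card_edges
  rw [Fintype.sum_sum_type] at hh
  rw [Finset.sum_congr rfl fun a _ => LT_degree_inl G a,
    Finset.sum_congr rfl fun a _ => LT_degree_inr G a] at hh
  simp only [Finset.sum_add_distrib, Finset.sum_const, Finset.card_univ, smul_eq_mul, mul_one,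
    ← Finset.mul_sum, G.sum_degrees_eq_twice_card_edges] at hh
  rw [Nat_card_edgeSet, Nat_card_edgeSet, Nat.card_eq_fintype_card]
  omega

private lemma LAT_card (G : SimpleGraph V) :
    (Nat.card (LATstep G).edgeSet : ℤ)
      = (Nat.card V : ℤ)^2 - Nat.card V - Nat.card G.edgeSet := by
  classical
  have hh := (LATstep G).sum_degrees_eq_twice_card_edges
  rw [Fintype.sum_sum_type] at hh
  have hG := G.sum_degrees_eq_twice_card_edges
  have e1 : ∀ a : V, ((LATstep G).degree (Sum.inl a) : ℤ) = (Fintype.card V : ℤ) - 1 := by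
    intro a
    have h := LAT_degree_inl G a
    push_cast [← h]; ring
  have e2 : ∀ a : V, ((LATstep G).degree (Sum.inr a) : ℤ)
      = (Fintype.card V : ℤ) - 1 - G.degree a := by
    intro a
    have h := LAT_degree_inr G a
    push_cast [← h]; ring
  have hcast := congrArg (fun n : ℕ => (n : ℤ)) hh
  push_cast at hcast
  rw [Finset.sum_congr rfl fun a _ => e1 a, Finset.sum_congr rfl fun a _ => e2 a] at hcast
  simp only [Finset.sum_sub_distrib, Finset.sum_const, Finset.card_univ, nsmul_eq_mul] at hcast
  have hGcast := congrArg (fun n : ℕ => (n : ℤ)) hG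
  push_cast at hGcast
  rw [hGcast] at hcast
  rw [Nat_card_edgeSet, Nat_card_edgeSet, Nat.card_eq_fintype_card]
  nlinarith [hcast]

private lemma card_ILMVertex : ∀ t : ℕ, Nat.card (ILMVertex (Fin 1) t) = 2 ^ t
  | 0 => by simp [ILMVertex, Nat.card_eq_fintype_card]
  | t + 1 => by
    have h : Nat.card (ILMVertex (Fin 1) (t+1))
        = Nat.card (ILMVertex (Fin 1) t ⊕ ILMVertex (Fin 1) t) := rfl
    haveI : Finite (ILMVertex (Fin 1) t) := Finite.of_fintype _
    rw [h, Nat.card_sum, card_ILMVertex t]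
    ring

private lemma ILM_closed_form :
    ∀ k : ℕ, 133 * (Nat.card (ILM (fun t => decide (t % 2 = 0)) (⊥ : SimpleGraph (Fin 1))
        (2 * k)).edgeSet : ℤ) = 28 * 16 ^ k - 57 * 4 ^ k + 29 * (-3 : ℤ) ^ k
  | 0 => by
    have h : (ILM (fun t => decide (t % 2 = 0)) (⊥ : SimpleGraph (Fin 1)) 0)
        = (⊥ : SimpleGraph (Fin 1)) := rfl
    rw [show 2 * 0 = 0 by ring, h]
    simp
    rw [Set.ncard_eq_zero]
    exact SimpleGraph.edgeSet_bot (V := Fin 1)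
  | k + 1 => by
    have ih := ILM_closed_form k
    set S : ℕ → Bool := fun t => decide (t % 2 = 0) with hS
    set F : ℕ → ℕ := fun t => Nat.card (ILM S (⊥ : SimpleGraph (Fin 1)) t).edgeSet with hF
    have hSeven : S (2 * k) = true := by simp [hS, Nat.mul_mod_right]
    have hSodd : S (2 * k + 1) = false := by
      simp only [hS, decide_eq_false_iff_not]
      omega
    have h1 : ILM S (⊥ : SimpleGraph (Fin 1)) (2 * k + 1)
        = LTstep (ILM S (⊥ : SimpleGraph (Fin 1)) (2 * k)) := by
      rw [ILM, hSeven]; simp; rfl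
    have h2 : ILM S (⊥ : SimpleGraph (Fin 1)) (2 * k + 1 + 1)
        = LATstep (ILM S (⊥ : SimpleGraph (Fin 1)) (2 * k + 1)) := by
      rw [ILM, hSodd]; simp; rfl
    have hF2 : F (2 * (k + 1)) = F (2 * k + 1 + 1) := congrArg F (by ring)
    have step1 : (F (2 * k + 1) : ℤ)
        = 3 * F (2 * k) + Nat.card (ILMVertex (Fin 1) (2 * k)) := by
      show (Nat.card (ILM S (⊥ : SimpleGraph (Fin 1)) (2 * k + 1)).edgeSet : ℤ) = _
      rw [h1]; exact LT_card _
    have step2 : (F (2 * k + 1 + 1) : ℤ)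
        = (Nat.card (ILMVertex (Fin 1) (2 * k + 1)) : ℤ) ^ 2
          - Nat.card (ILMVertex (Fin 1) (2 * k + 1)) - F (2 * k + 1) := by
      show (Nat.card (ILM S (⊥ : SimpleGraph (Fin 1)) (2 * k + 1 + 1)).edgeSet : ℤ) = _
      rw [h2]; exact LAT_card _
    have n1 : (Nat.card (ILMVertex (Fin 1) (2 * k)) : ℤ) = 4 ^ k := by
      rw [card_ILMVertex]; push_cast [pow_mul]; norm_num
    have n2 : (Nat.card (ILMVertex (Fin 1) (2 * k + 1)) : ℤ) = 2 * 4 ^ k := by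
      rw [card_ILMVertex]; push_cast [pow_succ, pow_mul]; ring
    rw [n1] at step1
    rw [n2] at step2
    show 133 * (F (2 * (k + 1)) : ℤ) = 28 * 16 ^ (k + 1) - 57 * 4 ^ (k + 1) + 29 * (-3 : ℤ) ^ (k + 1)
    rw [hF2]
    have h16 : (16 : ℤ) ^ k = 4 ^ k * 4 ^ k := by
      rw [show (16 : ℤ) = 4 * 4 by norm_num, mul_pow]
    have hih : 133 * (F (2 * k) : ℤ) = 28 * 16 ^ k - 57 * 4 ^ k + 29 * (-3 : ℤ) ^ k := ih
    rw [step2, step1]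
    linear_combination (-3 : ℤ) * hih - 532 * h16

end ILMAux

/-- For the alternating sequence (`s_t = 1` for even `t`, `s_t = 0`
for odd `t`) and initial graph `K₁`, along even times `t = 2k` the ratio
`e_t / 2^{2t-2}` converges to `16/19`. -/
theorem ILM_alternating_edge_limit :
    Filter.Tendsto
      (fun k : ℕ =>
        (Nat.card (ILM (fun t => decide (t % 2 = 0)) (⊥ : SimpleGraph (Fin 1)) (2 * k)).edgeSet : ℝ) /
          (2 : ℝ) ^ (2 * (2 * (k : ℤ)) - 2))
      Filter.atTop (nhds (16 / 19)) := by
  have hE : ∀ k : ℕ,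
      (Nat.card (ILM (fun t => decide (t % 2 = 0)) (⊥ : SimpleGraph (Fin 1)) (2 * k)).edgeSet : ℝ)
        = (28 * 16 ^ k - 57 * 4 ^ k + 29 * (-3 : ℝ) ^ k) / 133 := by
    intro k
    have h := ILM_closed_form k
    have h' := congrArg (fun z : ℤ => (z : ℝ)) h
    push_cast at h'
    linarith
  have hfun : (fun k : ℕ =>
      (Nat.card (ILM (fun t => decide (t % 2 = 0)) (⊥ : SimpleGraph (Fin 1)) (2 * k)).edgeSet : ℝ) /
        (2 : ℝ) ^ (2 * (2 * (k : ℤ)) - 2))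
      = fun k : ℕ => 16 / 19 - (228 / 133) * ((1 / 4 : ℝ)) ^ k + (116 / 133) * ((-3 / 16 : ℝ)) ^ k := by
    funext k
    rw [hE k]
    have h2 : (2 : ℝ) ^ (2 * (2 * (k : ℤ)) - 2) = (16 : ℝ) ^ k / 4 := by
      rw [show 2 * (2 * (k : ℤ)) - 2 = ((4 * k : ℕ) : ℤ) - 2 by push_cast; ring,
        zpow_sub₀ (by norm_num : (2:ℝ) ≠ 0), zpow_natCast]
      norm_num [pow_mul]
    rw [h2]
    have h16 : (16 : ℝ) ^ k ≠ 0 := by positivity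
    have e1 : ((1 / 4 : ℝ)) ^ k = 4 ^ k / 16 ^ k := by
      rw [← div_pow]; norm_num
    have e2 : ((-3 / 16 : ℝ)) ^ k = (-3 : ℝ) ^ k / 16 ^ k := div_pow _ _ _
    rw [e1, e2]
    field_simp
    ring
  rw [hfun]
  have l1 : Filter.Tendsto (fun k : ℕ => ((1 / 4 : ℝ)) ^ k) Filter.atTop (nhds 0) := by
    apply tendsto_pow_atTop_nhds_zero_of_abs_lt_one
    rw [abs_lt]; constructor <;> norm_num
  have l2 : Filter.Tendsto (fun k : ℕ => ((-3 / 16 : ℝ)) ^ k) Filter.atTop (nhds 0) := by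
    apply tendsto_pow_atTop_nhds_zero_of_abs_lt_one
    rw [abs_lt]; constructor <;> norm_num
  have := (Filter.Tendsto.sub (tendsto_const_nhds (x := (16 / 19 : ℝ)))
      (l1.const_mul (228 / 133 : ℝ))).add (l2.const_mul (116 / 133 : ℝ))
  simpa using this
end
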